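/- arXiv:2306.09383 — 4 statements merged into one kernel-verified Lean document; each statement's English description precedes it below -/
import Mathlib

section
/- For ω, ω₀ > 0 and f ∈ ℝ, the sequence ξ ∈ l²(ℤ) defined by ξ_k = (1/π) ∫_{−π/2}^{π/2} f·cos(2kφ) / (4ω² sin²φ + ω₀²) dφ satisfies the equations ω²(ξ_{k+1} − 2ξ_k + ξ_{k−1}) − ω₀² ξ_k + f δ_{k,0} = 0 for all k ∈ ℤ. -/
/-!
The second difference in `k` of `cos (2kφ)` is `-4 sin² φ · cos (2kφ)`, so applying
`ω² Δ² - ω₀²` to the integrand multiplies its numerator by exactly minus its denominator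
`4ω² sin² φ + ω₀²`. What is left is `-(1/π) ∫_{-π/2}^{π/2} f cos (2kφ) dφ = -f δ_{k,0}`.
-/

open Real

theorem Real.cos_second_difference (x φ : ℝ) :
    cos (x + 2 * φ) - 2 * cos x + cos (x - 2 * φ) = -4 * sin φ ^ 2 * cos x := by
  rw [cos_add, cos_sub, cos_two_mul, cos_sq']
  ring

theorem integral_cos_two_int_mul (k : ℤ) :
    ∫ φ in (-(π / 2))..(π / 2), cos (2 * (k : ℝ) * φ) = if k = 0 then π else 0 := by
  split_ifs with hk
  · simp [hk]
  · have hk' : (2 * (k : ℝ)) ≠ 0 := by simp [hk]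
    rw [intervalIntegral.integral_comp_mul_left (fun x => cos x) hk', integral_cos]
    have h_right : 2 * (k : ℝ) * (π / 2) = k * π := by ring
    have h_left : 2 * (k : ℝ) * -(π / 2) = ((-k : ℤ) : ℝ) * π := by push_cast; ring
    rw [h_right, h_left, sin_int_mul_pi, sin_int_mul_pi]
    simp

theorem intervalIntegral.integral_second_difference_combination {a b α β : ℝ} {u v w : ℝ → ℝ}
    (hu : IntervalIntegrable u MeasureTheory.volume a b)
    (hv : IntervalIntegrable v MeasureTheory.volume a b)
    (hw : IntervalIntegrable w MeasureTheory.volume a b) :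
    ∫ x in a..b, α * (u x - 2 * v x + w x) - β * v x
      = α * ((∫ x in a..b, u x) - 2 * (∫ x in a..b, v x) + ∫ x in a..b, w x)
        - β * ∫ x in a..b, v x := by
  rw [integral_sub (((hu.sub (hv.const_mul 2)).add hw).const_mul α) (hv.const_mul β),
    integral_const_mul, integral_const_mul, integral_add (hu.sub (hv.const_mul 2)) hw,
    integral_sub hu (hv.const_mul 2), integral_const_mul]

theorem cos_div_second_difference (ω ω₀ f x φ : ℝ)
    (hD : 4 * ω ^ 2 * sin φ ^ 2 + ω₀ ^ 2 ≠ 0) :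
    ω ^ 2 * (f * cos (2 * (x + 1) * φ) / (4 * ω ^ 2 * sin φ ^ 2 + ω₀ ^ 2)
        - 2 * (f * cos (2 * x * φ) / (4 * ω ^ 2 * sin φ ^ 2 + ω₀ ^ 2))
        + f * cos (2 * (x - 1) * φ) / (4 * ω ^ 2 * sin φ ^ 2 + ω₀ ^ 2))
      - ω₀ ^ 2 * (f * cos (2 * x * φ) / (4 * ω ^ 2 * sin φ ^ 2 + ω₀ ^ 2))
      = -(f * cos (2 * x * φ)) := by
  have h := cos_second_difference (2 * x * φ) φ
  rw [show 2 * x * φ + 2 * φ = 2 * (x + 1) * φ by ring,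
    show 2 * x * φ - 2 * φ = 2 * (x - 1) * φ by ring] at h
  calc _ = f * (ω ^ 2 * (cos (2 * (x + 1) * φ) - 2 * cos (2 * x * φ) + cos (2 * (x - 1) * φ))
          - ω₀ ^ 2 * cos (2 * x * φ)) / (4 * ω ^ 2 * sin φ ^ 2 + ω₀ ^ 2) := by ring
    _ = _ := by rw [h, div_eq_iff hD]; ring

theorem stmt_1_general (ω ω₀ f : ℝ) (hω₀ : 0 < ω₀)
    (ξ : ℤ → ℝ)
    (hξ : ∀ k : ℤ, ξ k =
      (1 / π) * ∫ φ in (-(π / 2))..(π / 2),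
        f * Real.cos (2 * (k : ℝ) * φ) / (4 * ω ^ 2 * Real.sin φ ^ 2 + ω₀ ^ 2)) :
    ∀ k : ℤ, ω ^ 2 * (ξ (k + 1) - 2 * ξ k + ξ (k - 1)) - ω₀ ^ 2 * ξ k
      + f * (if k = 0 then 1 else 0) = 0 := by
  intro k
  have hD : ∀ φ : ℝ, 4 * ω ^ 2 * sin φ ^ 2 + ω₀ ^ 2 ≠ 0 := fun φ => by positivity
  have hint : ∀ x : ℝ, IntervalIntegrable
      (fun φ => f * cos (2 * x * φ) / (4 * ω ^ 2 * sin φ ^ 2 + ω₀ ^ 2))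
      MeasureTheory.volume (-(π / 2)) (π / 2) := fun x =>
    (by fun_prop : Continuous _).div (by fun_prop) hD |>.intervalIntegrable _ _
  have hπξ : ω ^ 2 * (π * ξ (k + 1) - 2 * (π * ξ k) + π * ξ (k - 1)) - ω₀ ^ 2 * (π * ξ k)
      = -(f * if k = 0 then π else 0) := by
    simp only [hξ, one_div, mul_inv_cancel_left₀ pi_ne_zero]
    push_cast
    rw [← intervalIntegral.integral_second_difference_combination (hint _) (hint _) (hint _),
      intervalIntegral.integral_congr fun φ _ => cos_div_second_difference ω ω₀ f k φ (hD φ),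
      intervalIntegral.integral_neg, intervalIntegral.integral_const_mul, integral_cos_two_int_mul]
  apply mul_left_cancel₀ pi_ne_zero
  split_ifs at hπξ ⊢ <;> linear_combination hπξ

/-- The sequence `ξ_k = (1/π) ∫_{−π/2}^{π/2} f cos(2kφ)/(4ω² sin²φ + ω₀²) dφ`
solves `ω²(ξ_{k+1} − 2ξ_k + ξ_{k−1}) − ω₀² ξ_k + f δ_{k,0} = 0` for every `k ∈ ℤ`. -/
theorem stmt_1 (ω ω₀ f : ℝ) (hω : 0 < ω) (hω₀ : 0 < ω₀)
    (ξ : ℤ → ℝ)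
    (hξ : ∀ k : ℤ, ξ k =
      (1 / π) * ∫ φ in (-(π / 2))..(π / 2),
        f * Real.cos (2 * (k : ℝ) * φ) / (4 * ω ^ 2 * Real.sin φ ^ 2 + ω₀ ^ 2)) :
    ∀ k : ℤ, ω ^ 2 * (ξ (k + 1) - 2 * ξ k + ξ (k - 1)) - ω₀ ^ 2 * ξ k
      + f * (if k = 0 then 1 else 0) = 0 :=
  stmt_1_general ω ω₀ f hω₀ ξ hξ
end

section
/- The system of equations ω²(ξ_{k+1} − 2ξ_k + ξ_{k−1}) − ω₀² ξ_k + f δ_{k,0} = 0, k ∈ ℤ, has a unique solution ξ in l²(ℤ). -/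
/-- The system `ω²(ξ_{k+1} − 2ξ_k + ξ_{k−1}) − ω₀² ξ_k + f δ_{k,0} = 0`, `k ∈ ℤ`,
has a unique solution in `ℓ²(ℤ)`. -/
theorem stmt_2 (ω ω₀ f : ℝ) (hω : 0 < ω) (hω₀ : 0 < ω₀) :
    ∃! ξ : ℤ → ℝ, Memℓp ξ 2 ∧
      ∀ k : ℤ, ω ^ 2 * (ξ (k + 1) - 2 * ξ k + ξ (k - 1)) - ω₀ ^ 2 * ξ k
        + f * (if k = 0 then 1 else 0) = 0 := by
  have hω2 : (0:ℝ) < ω ^ 2 := by positivity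
  have hω02 : (0:ℝ) < ω₀ ^ 2 := by positivity
  set s : ℝ := Real.sqrt (ω₀ ^ 4 + 4 * ω ^ 2 * ω₀ ^ 2) with hs_def
  have hs2 : s ^ 2 = ω₀ ^ 4 + 4 * ω ^ 2 * ω₀ ^ 2 := by
    rw [hs_def]; rw [Real.sq_sqrt]; positivity
  have hs : 0 < s := by rw [hs_def]; apply Real.sqrt_pos.mpr; positivity
  set r : ℝ := (2 * ω ^ 2 + ω₀ ^ 2 - s) / (2 * ω ^ 2) with hr_def
  have h2 : 2 * ω ^ 2 * r = 2 * ω ^ 2 + ω₀ ^ 2 - s := by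
    rw [hr_def]; field_simp
  have hsB : s < 2 * ω ^ 2 + ω₀ ^ 2 := by nlinarith [hs2, hs]
  have hr0 : 0 < r := by
    rw [hr_def]; apply div_pos; linarith; positivity
  have hr1 : r < 1 := by
    rw [hr_def, div_lt_one (by positivity)]; nlinarith [hs2, hs]
  have hkey' : 4 * ω ^ 2 * (ω ^ 2 * r ^ 2 - (2 * ω ^ 2 + ω₀ ^ 2) * r + ω ^ 2) = 0 := by
    linear_combination (2 * ω ^ 2 * r - (2 * ω ^ 2 + ω₀ ^ 2) - s) * h2 + hs2
  have hkey : ω ^ 2 * r ^ 2 - (2 * ω ^ 2 + ω₀ ^ 2) * r + ω ^ 2 = 0 := by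
    rcases mul_eq_zero.mp hkey' with h | h
    · nlinarith
    · exact h
  set A : ℝ := f / s with hA_def
  have hA : A * s = f := by rw [hA_def]; field_simp
  set ξ : ℤ → ℝ := fun k => A * r ^ k.natAbs with hξ_def
  have hnorm : ∀ k : ℤ, ‖ξ k‖ = |A| * r ^ k.natAbs := by
    intro k
    simp only [hξ_def]
    rw [Real.norm_eq_abs, abs_mul, abs_pow, abs_of_pos hr0]
  have hmem : Memℓp ξ 2 := by
    apply memℓp_gen
    have hgeo : Summable (fun n : ℕ => A ^ 2 * (r ^ 2) ^ n) :=
      (summable_geometric_of_lt_one (by positivity) (by nlinarith)).mul_left _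
    have hz : Summable (fun k : ℤ => A ^ 2 * (r ^ 2) ^ k.natAbs) := by
      apply Summable.of_nat_of_neg
      · exact hgeo.congr (fun n => by simp)
      · exact hgeo.congr (fun n => by simp)
    apply hz.congr
    intro k
    rw [show ((2:ENNReal)).toReal = ((2:ℕ):ℝ) by norm_num, Real.rpow_natCast,
      hnorm k, mul_pow, sq_abs, ← pow_mul, ← pow_mul, Nat.mul_comm]
  have heqs : ∀ k : ℤ, ω ^ 2 * (ξ (k + 1) - 2 * ξ k + ξ (k - 1)) - ω₀ ^ 2 * ξ k
        + f * (if k = 0 then 1 else 0) = 0 := by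
    intro k
    match k with
    | Int.ofNat 0 =>
      have e1 : ((Int.ofNat 0) + 1).natAbs = 1 := rfl
      have e2 : ((Int.ofNat 0) - 1).natAbs = 1 := by decide
      have e3 : (Int.ofNat 0).natAbs = 0 := rfl
      have e0 : (Int.ofNat 0) = 0 := rfl
      simp only [hξ_def, e1, e2, e3, if_pos e0, pow_one, pow_zero, mul_one]
      linear_combination A * h2 - hA
    | Int.ofNat (n+1) =>
      have e1 : ((Int.ofNat (n+1)) + 1).natAbs = n + 2 := by
        simp only [Int.ofNat_eq_coe]; omega
      have e2 : ((Int.ofNat (n+1)) - 1).natAbs = n := by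
        simp only [Int.ofNat_eq_coe]; omega
      have e3 : (Int.ofNat (n+1)).natAbs = n + 1 := by
        simp only [Int.ofNat_eq_coe]; omega
      have e0 : (Int.ofNat (n+1)) ≠ 0 := by
        simp only [Int.ofNat_eq_coe]; omega
      simp only [hξ_def, e1, e2, e3, if_neg e0, mul_zero, add_zero]
      have hpow1 : r ^ (n + 2) = r ^ n * r ^ 2 := by ring
      have hpow2 : r ^ (n + 1) = r ^ n * r := by ring
      rw [hpow1, hpow2]
      linear_combination (A * r ^ n) * hkey
    | Int.negSucc n =>
      have en : Int.negSucc n = -(↑n + 1) := Int.negSucc_eq n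
      have e1 : ((Int.negSucc n) + 1).natAbs = n := by rw [en]; omega
      have e2 : ((Int.negSucc n) - 1).natAbs = n + 2 := by rw [en]; omega
      have e3 : (Int.negSucc n).natAbs = n + 1 := by rw [en]; omega
      have e0 : (Int.negSucc n) ≠ 0 := by rw [en]; omega
      simp only [hξ_def, e1, e2, e3, if_neg e0, mul_zero, add_zero]
      have hpow1 : r ^ (n + 2) = r ^ n * r ^ 2 := by ring
      have hpow2 : r ^ (n + 1) = r ^ n * r := by ring
      rw [hpow1, hpow2]
      linear_combination (A * r ^ n) * hkey
  clear_value ξ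
  refine ⟨ξ, ⟨hmem, heqs⟩, ?_⟩
  rintro ξ₁ ⟨hm1, he1⟩
  set η : ℤ → ℝ := fun k => ξ₁ k - ξ k with hη_def
  have hηmem : Memℓp η 2 := hm1.sub hmem
  have hsum : Summable fun k : ℤ => ‖η k‖ ^ (2 : ENNReal).toReal :=
    hηmem.summable (by norm_num)
  have hsum2 : Summable fun k : ℤ => |η k| ^ 2 := by
    apply hsum.congr
    intro k
    rw [show ((2:ENNReal)).toReal = ((2:ℕ):ℝ) by norm_num, Real.rpow_natCast,
      Real.norm_eq_abs]
  set T : ℝ := ∑' k : ℤ, |η k| ^ 2 with hT_def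
  have hbd : ∀ k : ℤ, |η k| ≤ Real.sqrt T := by
    intro k
    have h1 : |η k| ^ 2 ≤ T := Summable.le_tsum hsum2 k (fun i _ => by positivity)
    have := Real.sqrt_le_sqrt h1
    rwa [Real.sqrt_sq (abs_nonneg _)] at this
  have hbdd : BddAbove (Set.range fun k : ℤ => |η k|) := by
    refine ⟨Real.sqrt T, ?_⟩
    rintro x ⟨k, rfl⟩
    exact hbd k
  set S : ℝ := ⨆ k : ℤ, |η k| with hS_def
  have hle : ∀ k : ℤ, |η k| ≤ S := fun k => le_ciSup hbdd k
  have hS0 : 0 ≤ S := le_trans (abs_nonneg _) (hle 0)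
  have hhom : ∀ k : ℤ, (2 * ω ^ 2 + ω₀ ^ 2) * η k = ω ^ 2 * (η (k + 1) + η (k - 1)) := by
    intro k
    have ha := he1 k
    have hb := heqs k
    simp only [hη_def]
    linear_combination hb - ha
  have key : ∀ k : ℤ, (2 * ω ^ 2 + ω₀ ^ 2) * |η k| ≤ 2 * ω ^ 2 * S := by
    intro k
    have h3 : (2 * ω ^ 2 + ω₀ ^ 2) * |η k| = ω ^ 2 * |η (k + 1) + η (k - 1)| := by
      rw [← abs_of_pos (show (0:ℝ) < 2 * ω ^ 2 + ω₀ ^ 2 by positivity), ← abs_mul,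
        hhom k, abs_mul, abs_of_pos hω2]
    rw [h3]
    nlinarith [abs_add_le (η (k + 1)) (η (k - 1)), hle (k + 1), hle (k - 1)]
  have hSle : S ≤ (2 * ω ^ 2 * S) / (2 * ω ^ 2 + ω₀ ^ 2) := by
    apply ciSup_le
    intro k
    rw [le_div_iff₀ (by positivity)]
    nlinarith [key k]
  have hS : S ≤ 0 := by
    rw [le_div_iff₀ (by positivity)] at hSle
    nlinarith
  have hη0 : ∀ k : ℤ, η k = 0 := by
    intro k
    have h0 : |η k| ≤ 0 := le_trans (hle k) hS
    exact abs_eq_zero.mp (le_antisymm h0 (abs_nonneg _))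
  funext k
  have := hη0 k
  simp only [hη_def] at this
  linarith
end

section
/- If ξ ∈ l²(ℤ) satisfies Vξ = f e₀, where V is the operator (Vq)_k = ω²(2q_k − q_{k+1} − q_{k−1}) + ω₀² q_k and e₀ is the standard unit vector at index 0, then the potential energy U_ξ = (1/2)(Vξ, ξ) − f ξ₀ equals −(1/2) f ξ₀ = −f² / (2 ω₀ √(4ω² + ω₀²)), which is strictly negative when f ≠ 0. -/
/-!
Away from the origin, `Vξ = f e₀` is the recurrence `ω² (ξ (k+1) + ξ (k-1)) = (2ω² + ω₀²) ξ k`,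
whose characteristic roots are `r` and `1/r` with `0 < r < 1`. Along any solution the quantity
`rⁿ (ξ (n+1) - r ξ n)` is constant; as `ξ ∈ ℓ²` tends to `0` at `±∞`, it vanishes, so
`ξ (±1) = r ξ 0`. The equation at `k = 0` then gives `ξ 0 = f / (ω₀ √(4ω² + ω₀²))`, and
`(Vξ, ξ) = f ξ 0` since `Vξ` is supported at `0`.
-/

open Filter Topology

theorem Memℓp.tendsto_cofinite_zero {ι E : Type*} [NormedAddCommGroup E] {p : ENNReal}
    {f : ι → E} (hp : 0 < p.toReal) (hf : Memℓp f p) : Tendsto f cofinite (𝓝 0) := by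
  have hpow : Tendsto (fun i ↦ ‖f i‖ ^ p.toReal) cofinite (𝓝 0) :=
    (hf.summable hp).tendsto_cofinite_zero
  have hroot := ((Real.continuousAt_rpow_const 0 p.toReal⁻¹ (.inr (inv_nonneg.2 hp.le))).tendsto
    |>.comp hpow)
  rw [Real.zero_rpow (inv_ne_zero hp.ne')] at hroot
  refine tendsto_zero_iff_norm_tendsto_zero.2 (hroot.congr fun i ↦ ?_)
  exact Real.rpow_rpow_inv (norm_nonneg _) hp.ne'

theorem apply_one_eq_mul_apply_zero_of_tendsto_zero {𝕜 : Type*} [NormedField 𝕜] {b c r : 𝕜}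
    (hc : c ≠ 0) (hr : ‖r‖ < 1) (hroot : c * r ^ 2 - b * r + c = 0) {g : ℕ → 𝕜}
    (hrec : ∀ n, c * (g (n + 2) + g n) = b * g (n + 1)) (hg : Tendsto g atTop (𝓝 0)) :
    g 1 = r * g 0 := by
  have hconst : ∀ n, r ^ n * (g (n + 1) - r * g n) = g 1 - r * g 0 := by
    intro n
    induction n with
    | zero => simp
    | succ n ih =>
      rw [← ih]
      refine mul_left_cancel₀ hc ?_
      linear_combination r ^ (n + 1) * hrec n - r ^ n * g (n + 1) * hroot
  have hlim : Tendsto (fun n ↦ r ^ n * (g (n + 1) - r * g n)) atTop (𝓝 (0 * (0 - r * 0))) :=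
    (tendsto_pow_atTop_nhds_zero_of_norm_lt_one hr).mul
      ((hg.comp (tendsto_add_atTop_nat 1)).sub (hg.const_mul r))
  simp only [hconst, mul_zero, sub_zero] at hlim
  exact sub_eq_zero.1 (tendsto_nhds_unique tendsto_const_nhds hlim)

theorem Int.apply_one_eq_and_apply_neg_one_eq {𝕜 : Type*} [NormedField 𝕜] {b c r : 𝕜}
    (hc : c ≠ 0) (hr : ‖r‖ < 1) (hroot : c * r ^ 2 - b * r + c = 0) {ξ : ℤ → 𝕜}
    (hrec : ∀ k ≠ 0, c * (ξ (k + 1) + ξ (k - 1)) = b * ξ k) (hξ : Tendsto ξ cofinite (𝓝 0)) :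
    ξ 1 = r * ξ 0 ∧ ξ (-1) = r * ξ 0 := by
  rw [Int.cofinite_eq, tendsto_sup] at hξ
  constructor
  · refine apply_one_eq_mul_apply_zero_of_tendsto_zero (g := fun n : ℕ ↦ ξ n) hc hr hroot
      (fun n ↦ ?_) (hξ.2.comp tendsto_natCast_atTop_atTop)
    have := hrec (n + 1) (by omega)
    push_cast
    convert this using 3 <;> ring_nf
  · refine apply_one_eq_mul_apply_zero_of_tendsto_zero (g := fun n : ℕ ↦ ξ (-n)) hc hr hroot
      (fun n ↦ ?_) (hξ.1.comp (tendsto_neg_atTop_atBot.comp tendsto_natCast_atTop_atTop))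
    have := hrec (-(n + 1)) (by omega)
    push_cast
    rw [add_comm]
    convert this using 3 <;> ring_nf

noncomputable def latticeOp (ω ω₀ : ℝ) (q : ℤ → ℝ) (k : ℤ) : ℝ :=
  ω ^ 2 * (2 * q k - q (k + 1) - q (k - 1)) + ω₀ ^ 2 * q k

/-- The root of `ω² x² - (2ω² + ω₀²) x + ω²` in `(0, 1)`. -/
noncomputable def decayRoot (ω ω₀ : ℝ) : ℝ :=
  (2 * ω ^ 2 + ω₀ ^ 2 - ω₀ * √(4 * ω ^ 2 + ω₀ ^ 2)) / (2 * ω ^ 2)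

section decayRoot

variable {ω ω₀ : ℝ}

theorem two_mul_sq_mul_decayRoot (hω : ω ≠ 0) :
    2 * ω ^ 2 * decayRoot ω ω₀ = 2 * ω ^ 2 + ω₀ ^ 2 - ω₀ * √(4 * ω ^ 2 + ω₀ ^ 2) := by
  unfold decayRoot
  field_simp

theorem decayRoot_isRoot (hω : ω ≠ 0) :
    ω ^ 2 * decayRoot ω ω₀ ^ 2 - (2 * ω ^ 2 + ω₀ ^ 2) * decayRoot ω ω₀ + ω ^ 2 = 0 := by
  have hs : √(4 * ω ^ 2 + ω₀ ^ 2) ^ 2 = 4 * ω ^ 2 + ω₀ ^ 2 := Real.sq_sqrt (by positivity)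
  have h := two_mul_sq_mul_decayRoot (ω₀ := ω₀) hω
  refine mul_left_cancel₀ (by positivity : (4 * ω ^ 2 : ℝ) ≠ 0) ?_
  linear_combination (2 * ω ^ 2 * decayRoot ω ω₀ - 2 * ω ^ 2 - ω₀ ^ 2
    - ω₀ * √(4 * ω ^ 2 + ω₀ ^ 2)) * h + ω₀ ^ 2 * hs

theorem abs_decayRoot_lt_one (hω : ω ≠ 0) (hω₀ : 0 < ω₀) : |decayRoot ω ω₀| < 1 := by
  set s := √(4 * ω ^ 2 + ω₀ ^ 2)
  have hs : s ^ 2 = 4 * ω ^ 2 + ω₀ ^ 2 := Real.sq_sqrt (by positivity)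
  have hω2 : 0 < ω ^ 2 := by positivity
  have hω₀s : ω₀ < s := by nlinarith [Real.sqrt_nonneg (4 * ω ^ 2 + ω₀ ^ 2)]
  have hsb : ω₀ * s < 2 * ω ^ 2 + ω₀ ^ 2 := by
    nlinarith [mul_pos hω₀ (hω₀.trans hω₀s)]
  have h := two_mul_sq_mul_decayRoot (ω₀ := ω₀) hω
  rw [abs_lt]
  constructor <;> nlinarith

end decayRoot

theorem apply_zero_eq_of_latticeOp_eq_single {ω ω₀ f : ℝ} (hω : ω ≠ 0) (hω₀ : 0 < ω₀)
    {ξ : ℤ → ℝ} (hξ : Tendsto ξ cofinite (𝓝 0))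
    (hVξ : ∀ k, latticeOp ω ω₀ ξ k = f * if k = 0 then 1 else 0) :
    ξ 0 = f / (ω₀ * √(4 * ω ^ 2 + ω₀ ^ 2)) := by
  have hrec : ∀ k ≠ 0, ω ^ 2 * (ξ (k + 1) + ξ (k - 1)) = (2 * ω ^ 2 + ω₀ ^ 2) * ξ k := by
    intro k hk
    have := hVξ k
    rw [if_neg hk, mul_zero] at this
    unfold latticeOp at this
    linear_combination -this
  obtain ⟨hξ1, hξm1⟩ := Int.apply_one_eq_and_apply_neg_one_eq (by positivity)
    (by rw [Real.norm_eq_abs]; exact abs_decayRoot_lt_one hω hω₀)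
    (decayRoot_isRoot hω) hrec hξ
  have h0 := hVξ 0
  rw [if_pos rfl, mul_one] at h0
  unfold latticeOp at h0
  rw [zero_add, zero_sub, hξ1, hξm1] at h0
  have hs0 : 0 < ω₀ * √(4 * ω ^ 2 + ω₀ ^ 2) := by positivity
  rw [eq_div_iff hs0.ne']
  linear_combination h0 + ξ 0 * two_mul_sq_mul_decayRoot (ω₀ := ω₀) hω

/-- If `ξ ∈ ℓ²(ℤ)` satisfies `Vξ = f e₀` (coordinatewise), then the potential energy
`U_ξ = (1/2)(Vξ, ξ) − f ξ₀` equals `−(1/2) f ξ₀ = −f²/(2ω₀√(4ω² + ω₀²))`,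
strictly negative for `f ≠ 0`. -/
theorem stmt_5 (ω ω₀ f : ℝ) (hω : 0 < ω) (hω₀ : 0 < ω₀)
    (ξ : ℤ → ℝ) (hξ2 : Memℓp ξ 2)
    (hVξ : ∀ k : ℤ, ω ^ 2 * (2 * ξ k - ξ (k + 1) - ξ (k - 1)) + ω₀ ^ 2 * ξ k
      = f * (if k = 0 then 1 else 0)) :
    (1 / 2) * (∑' k : ℤ,
        (ω ^ 2 * (2 * ξ k - ξ (k + 1) - ξ (k - 1)) + ω₀ ^ 2 * ξ k) * ξ k) - f * ξ 0
      = -(1 / 2) * f * ξ 0 ∧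
    -(1 / 2) * f * ξ 0 = -(f ^ 2 / (2 * ω₀ * Real.sqrt (4 * ω ^ 2 + ω₀ ^ 2))) ∧
    (f ≠ 0 → -(1 / 2) * f * ξ 0 < 0) := by
  have hsum : ∑' k : ℤ, (ω ^ 2 * (2 * ξ k - ξ (k + 1) - ξ (k - 1)) + ω₀ ^ 2 * ξ k) * ξ k
      = f * ξ 0 := by
    simp_rw [hVξ, mul_ite, mul_one, mul_zero, ite_mul, zero_mul, tsum_ite_eq]
  have hξ0 := apply_zero_eq_of_latticeOp_eq_single hω.ne' hω₀
    (hξ2.tendsto_cofinite_zero (by norm_num)) hVξ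
  have hU : -(1 / 2) * f * ξ 0 = -(f ^ 2 / (2 * ω₀ * √(4 * ω ^ 2 + ω₀ ^ 2))) := by
    rw [hξ0]
    field_simp
  refine ⟨by rw [hsum]; ring, hU, fun hf ↦ ?_⟩
  rw [hU, neg_neg_iff_pos]
  positivity
end

section
/- Let g : ℝ → ℂ be smooth and π-periodic, and S(φ) = √(4ω² sin²φ + ω₀²). Then the oscillatory integral a(t) = (1/π) ∫_{−π/2}^{π/2} g(φ) cos(t S(φ)) dφ satisfies a(t) = O(t^{−1/2}) as t → ∞. -/
open Real Filter

namespace Stmt15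


noncomputable def Sf (ω ω₀ : ℝ) (φ : ℝ) : ℝ := Real.sqrt (4 * ω ^ 2 * Real.sin φ ^ 2 + ω₀ ^ 2)

noncomputable def qf (ω ω₀ : ℝ) (φ : ℝ) : ℝ := Sf ω ω₀ φ / (2 * ω ^ 2 * Real.sin (2 * φ))

noncomputable def qd (ω ω₀ : ℝ) (φ : ℝ) : ℝ :=
  1 / Sf ω ω₀ φ - Sf ω ω₀ φ * Real.cos (2 * φ) / (ω ^ 2 * Real.sin (2 * φ) ^ 2)

variable {ω ω₀ : ℝ}

lemma u_pos (hω₀ : 0 < ω₀) (φ : ℝ) : 0 < 4 * ω ^ 2 * Real.sin φ ^ 2 + ω₀ ^ 2 := by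
  have h1 : 0 ≤ 4 * ω ^ 2 * Real.sin φ ^ 2 := by positivity
  nlinarith

lemma Sf_pos (hω₀ : 0 < ω₀) (φ : ℝ) : 0 < Sf ω ω₀ φ :=
  Real.sqrt_pos.2 (u_pos hω₀ φ)

lemma Sf_ge (hω₀ : 0 < ω₀) (φ : ℝ) : ω₀ ≤ Sf ω ω₀ φ := by
  have h1 : 0 ≤ 4 * ω ^ 2 * Real.sin φ ^ 2 := by positivity
  have := Real.sqrt_le_sqrt (show ω₀ ^ 2 ≤ 4 * ω ^ 2 * Real.sin φ ^ 2 + ω₀ ^ 2 by linarith)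
  rwa [Real.sqrt_sq hω₀.le] at this

lemma Sf_le (φ : ℝ) : Sf ω ω₀ φ ≤ Real.sqrt (4 * ω ^ 2 + ω₀ ^ 2) := by
  apply Real.sqrt_le_sqrt
  have h1 : Real.sin φ ^ 2 ≤ 1 := Real.sin_sq_le_one φ
  nlinarith [sq_nonneg ω]

lemma continuous_Sf : Continuous (Sf ω ω₀) := by
  apply Continuous.sqrt
  continuity

lemma hasDerivAt_Sf (hω₀ : 0 < ω₀) (φ : ℝ) :
    HasDerivAt (Sf ω ω₀) (2 * ω ^ 2 * Real.sin (2 * φ) / Sf ω ω₀ φ) φ := by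
  have hu : HasDerivAt (fun φ => 4 * ω ^ 2 * Real.sin φ ^ 2 + ω₀ ^ 2)
      (4 * ω ^ 2 * (2 * Real.sin φ * Real.cos φ)) φ := by
    have := (((Real.hasDerivAt_sin φ).pow 2).const_mul (4 * ω ^ 2)).add_const (ω₀ ^ 2)
    refine this.congr_deriv ?_
    ring
  have hsq := (Real.hasDerivAt_sqrt (u_pos hω₀ φ).ne').comp φ hu
  refine hsq.congr_deriv ?_
  rw [Real.sin_two_mul]
  unfold Sf
  field_simp
  ring

lemma hasDerivAt_qf (hω : 0 < ω) (hω₀ : 0 < ω₀) {φ : ℝ} (h : Real.sin (2 * φ) ≠ 0) :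
    HasDerivAt (qf ω ω₀) (qd ω ω₀ φ) φ := by
  have hden : HasDerivAt (fun φ => 2 * ω ^ 2 * Real.sin (2 * φ)) (2 * ω ^ 2 * (2 * Real.cos (2 * φ))) φ := by
    have h2 : HasDerivAt (fun φ : ℝ => 2 * φ) 2 φ := by
      simpa using (hasDerivAt_id φ).const_mul 2
    have := ((Real.hasDerivAt_sin (2 * φ)).comp φ h2).const_mul (2 * ω ^ 2)
    refine this.congr_deriv ?_; ring
  have hden0 : 2 * ω ^ 2 * Real.sin (2 * φ) ≠ 0 := by positivity
  have := (hasDerivAt_Sf (ω := ω) hω₀ φ).div hden hden0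
  refine this.congr_deriv ?_
  unfold qd
  have hS0 : Sf ω ω₀ φ ≠ 0 := (Sf_pos hω₀ φ).ne'
  field_simp



lemma sin_lower_abs {δ φ : ℝ} (hδ : 0 < δ) (h1 : δ ≤ |φ|) (h2 : |φ| ≤ π / 2 - δ) :
    4 * δ / π ≤ |Real.sin (2 * φ)| := by
  have hπ := Real.pi_pos
  have habs : |Real.sin (2 * φ)| = Real.sin (2 * |φ|) := by
    rcases abs_cases φ with ⟨h, _⟩ | ⟨h, hneg⟩
    · rw [h, abs_of_nonneg]
      apply Real.sin_nonneg_of_nonneg_of_le_pi <;> nlinarith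
    · rw [h, show (2 : ℝ) * -φ = -(2 * φ) by ring, Real.sin_neg]
      apply abs_of_nonpos
      have := Real.sin_nonneg_of_nonneg_of_le_pi (x := -(2 * φ)) (by nlinarith) (by nlinarith)
      rw [Real.sin_neg] at this
      linarith
  rw [habs]
  set x := 2 * |φ| with hx
  have hx1 : 2 * δ ≤ x := by simp [hx]; linarith
  have hx2 : x ≤ π - 2 * δ := by simp [hx]; linarith
  rcases le_or_gt x (π / 2) with hc | hc
  · have := Real.mul_le_sin (x := x) (by linarith) hc
    calc 4 * δ / π = 2 / π * (2 * δ) := by ring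
    _ ≤ 2 / π * x := by
        apply mul_le_mul_of_nonneg_left hx1; positivity
    _ ≤ Real.sin x := this
  · rw [← Real.sin_pi_sub]
    have := Real.mul_le_sin (x := π - x) (by linarith) (by linarith)
    calc 4 * δ / π = 2 / π * (2 * δ) := by ring
    _ ≤ 2 / π * (π - x) := by
        apply mul_le_mul_of_nonneg_left (by linarith); positivity
    _ ≤ Real.sin (π - x) := this

lemma hasDerivAt_G {φ : ℝ} (h : Real.sin (2 * φ) ≠ 0) :
    HasDerivAt (fun φ => -Real.cos (2 * φ) / (2 * Real.sin (2 * φ)))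
      (1 / Real.sin (2 * φ) ^ 2) φ := by
  have h2 : HasDerivAt (fun φ : ℝ => 2 * φ) 2 φ := by
    simpa using (hasDerivAt_id φ).const_mul 2
  have hnum : HasDerivAt (fun φ => -Real.cos (2 * φ)) (-(-Real.sin (2 * φ) * 2)) φ :=
    (((Real.hasDerivAt_cos (2 * φ)).comp φ h2)).neg
  have hden : HasDerivAt (fun φ => 2 * Real.sin (2 * φ)) (2 * (Real.cos (2 * φ) * 2)) φ :=
    ((Real.hasDerivAt_sin (2 * φ)).comp φ h2).const_mul 2
  have hden0 : 2 * Real.sin (2 * φ) ≠ 0 := by simp [h]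
  have := hnum.div hden hden0
  refine this.congr_deriv ?_
  have hpyth := Real.sin_sq_add_cos_sq (2 * φ)
  field_simp
  nlinarith [hpyth]

lemma G_abs_le {s₀ x : ℝ} (hs₀ : 0 < s₀) (hx : s₀ ≤ |Real.sin (2 * x)|) :
    |(-Real.cos (2 * x) / (2 * Real.sin (2 * x)))| ≤ 1 / (2 * s₀) := by
  rw [abs_div, abs_neg]
  apply div_le_div₀ (by positivity) (by simpa using Real.abs_cos_le_one (2 * x)) (by positivity)
  rw [abs_mul]
  rw [abs_of_nonneg (by norm_num : (0:ℝ) ≤ 2)]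
  linarith

lemma integral_inv_sin_sq {a b s₀ : ℝ} (hab : a ≤ b) (hs₀ : 0 < s₀)
    (hsin : ∀ φ ∈ Set.Icc a b, s₀ ≤ |Real.sin (2 * φ)|) :
    (∫ φ in a..b, 1 / Real.sin (2 * φ) ^ 2) ≤ 1 / s₀ := by
  have hne : ∀ φ ∈ Set.Icc a b, Real.sin (2 * φ) ≠ 0 := by
    intro φ hφ
    have := hsin φ hφ
    intro h; rw [h] at this; simp at this; linarith
  have hcont : ContinuousOn (fun φ => 1 / Real.sin (2 * φ) ^ 2) (Set.Icc a b) := by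
    apply ContinuousOn.div continuousOn_const
    · fun_prop
    · intro φ hφ
      exact pow_ne_zero 2 (hne φ hφ)
  have hint : IntervalIntegrable (fun φ => 1 / Real.sin (2 * φ) ^ 2) MeasureTheory.volume a b :=
    hcont.intervalIntegrable_of_Icc hab
  rw [intervalIntegral.integral_eq_sub_of_hasDerivAt (f := fun φ => -Real.cos (2 * φ) / (2 * Real.sin (2 * φ)))
    (fun x hx => hasDerivAt_G (hne x (by rwa [Set.uIcc_of_le hab] at hx))) hint]
  have hb := abs_le.1 (G_abs_le hs₀ (hsin b ⟨hab, le_refl b⟩))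
  have ha := abs_le.1 (G_abs_le hs₀ (hsin a ⟨le_refl a, hab⟩))
  have : 1 / (2 * s₀) + 1 / (2 * s₀) = 1 / s₀ := by rw [← add_div]; rw [div_eq_div_iff (by positivity) hs₀.ne']; ring
  linarith [hb.1, hb.2, ha.1, ha.2]


lemma M_pos (hω₀ : 0 < ω₀) : 0 < Real.sqrt (4 * ω ^ 2 + ω₀ ^ 2) := by
  apply Real.sqrt_pos.2; positivity

lemma qf_abs_le (hω : 0 < ω) (hω₀ : 0 < ω₀) {φ : ℝ} (h : Real.sin (2 * φ) ≠ 0) :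
    |qf ω ω₀ φ| ≤ (Real.sqrt (4 * ω ^ 2 + ω₀ ^ 2) / (2 * ω ^ 2)) * (1 / Real.sin (2 * φ) ^ 2) := by
  have hs : 0 < |Real.sin (2 * φ)| := abs_pos.2 h
  have hs1 : |Real.sin (2 * φ)| ≤ 1 := Real.abs_sin_le_one _
  have hSpos := Sf_pos (ω := ω) hω₀ φ
  have hSle := Sf_le (ω := ω) (ω₀ := ω₀) φ
  have hM := M_pos (ω := ω) hω₀
  rw [qf, abs_div, abs_of_nonneg hSpos.le, abs_mul, abs_of_nonneg (by positivity : (0:ℝ) ≤ 2 * ω ^ 2)]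
  rw [div_le_iff₀ (by positivity), ← sq_abs (Real.sin (2 * φ))]
  have key : Sf ω ω₀ φ * |Real.sin (2 * φ)| ≤ Real.sqrt (4 * ω ^ 2 + ω₀ ^ 2) := by
    nlinarith
  have h2 : (Real.sqrt (4 * ω ^ 2 + ω₀ ^ 2) / (2 * ω ^ 2)) * (1 / |Real.sin (2 * φ)| ^ 2) *
      (2 * ω ^ 2 * |Real.sin (2 * φ)|) = Real.sqrt (4 * ω ^ 2 + ω₀ ^ 2) / |Real.sin (2 * φ)| := by
    field_simp
  rw [h2, le_div_iff₀ hs]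
  nlinarith

lemma qd_abs_le (hω : 0 < ω) (hω₀ : 0 < ω₀) {φ : ℝ} (h : Real.sin (2 * φ) ≠ 0) :
    |qd ω ω₀ φ| ≤ (1 / ω₀ + Real.sqrt (4 * ω ^ 2 + ω₀ ^ 2) / ω ^ 2) * (1 / Real.sin (2 * φ) ^ 2) := by
  have hs : 0 < Real.sin (2 * φ) ^ 2 := by positivity
  have hs1 : Real.sin (2 * φ) ^ 2 ≤ 1 := Real.sin_sq_le_one _
  have hSpos := Sf_pos (ω := ω) hω₀ φ
  have hSge := Sf_ge (ω := ω) hω₀ φ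
  have hSle := Sf_le (ω := ω) (ω₀ := ω₀) φ
  have hM := M_pos (ω := ω) hω₀
  have hc := Real.abs_cos_le_one (2 * φ)
  have h1 : |qd ω ω₀ φ| ≤ 1 / Sf ω ω₀ φ + Sf ω ω₀ φ / (ω ^ 2 * Real.sin (2 * φ) ^ 2) := by
    rw [qd]
    refine (abs_sub _ _).trans ?_
    have e1 : |1 / Sf ω ω₀ φ| = 1 / Sf ω ω₀ φ := abs_of_nonneg (by positivity)
    have e2 : |Sf ω ω₀ φ * Real.cos (2 * φ) / (ω ^ 2 * Real.sin (2 * φ) ^ 2)|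
        ≤ Sf ω ω₀ φ / (ω ^ 2 * Real.sin (2 * φ) ^ 2) := by
      rw [abs_div, abs_mul, abs_of_nonneg hSpos.le,
        abs_of_nonneg (by positivity : (0:ℝ) ≤ ω ^ 2 * Real.sin (2 * φ) ^ 2)]
      apply div_le_div₀ hSpos.le _ (by positivity) (le_refl _)
      nlinarith
    linarith
  refine h1.trans ?_
  have h2 : 1 / Sf ω ω₀ φ ≤ (1 / ω₀) * (1 / Real.sin (2 * φ) ^ 2) := by
    rw [div_mul_div_comm, one_mul]
    apply div_le_div₀ (by norm_num) (le_refl 1) (by positivity)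
    nlinarith
  have h3 : Sf ω ω₀ φ / (ω ^ 2 * Real.sin (2 * φ) ^ 2) ≤
      (Real.sqrt (4 * ω ^ 2 + ω₀ ^ 2) / ω ^ 2) * (1 / Real.sin (2 * φ) ^ 2) := by
    rw [div_mul_div_comm, mul_one]
    apply div_le_div₀ (by positivity) hSle (by positivity) (le_refl _)
  rw [add_mul]
  linarith

lemma key (hω : 0 < ω) (hω₀ : 0 < ω₀) (g : ℝ → ℂ) (hg : ContDiff ℝ (⊤ : ℕ∞) g)
    {t a b s₀ Cg Cg' : ℝ} (ht : 0 < t) (hab : a ≤ b) (hs₀ : 0 < s₀)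
    (hsin : ∀ φ ∈ Set.Icc a b, s₀ ≤ |Real.sin (2 * φ)|)
    (hCg : ∀ φ ∈ Set.Icc a b, ‖g φ‖ ≤ Cg)
    (hCg' : ∀ φ ∈ Set.Icc a b, ‖deriv g φ‖ ≤ Cg') :
    ‖∫ φ in a..b, g φ * Real.cos (t * Sf ω ω₀ φ)‖ ≤
      (2 * Cg * (Real.sqrt (4 * ω ^ 2 + ω₀ ^ 2) / (2 * ω ^ 2))
        + (Cg' * (Real.sqrt (4 * ω ^ 2 + ω₀ ^ 2) / (2 * ω ^ 2))
          + Cg * (1 / ω₀ + Real.sqrt (4 * ω ^ 2 + ω₀ ^ 2) / ω ^ 2))) / (t * s₀) := by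
  set M := Real.sqrt (4 * ω ^ 2 + ω₀ ^ 2) with hMdef
  have hM : 0 < M := M_pos (ω := ω) hω₀
  have hCg0 : 0 ≤ Cg := le_trans (norm_nonneg _) (hCg a ⟨le_refl a, hab⟩)
  have hCg'0 : 0 ≤ Cg' := le_trans (norm_nonneg _) (hCg' a ⟨le_refl a, hab⟩)
  have hne : ∀ φ ∈ Set.Icc a b, Real.sin (2 * φ) ≠ 0 := by
    intro φ hφ hzero
    have := hsin φ hφ
    rw [hzero] at this; simp at this; linarith
  set F : ℝ → ℂ := fun φ => g φ * ((qf ω ω₀ φ * Real.sin (t * Sf ω ω₀ φ) / t : ℝ) : ℂ) with hFdef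
  set E : ℝ → ℂ := fun φ =>
    (deriv g φ * (qf ω ω₀ φ : ℂ) + g φ * (qd ω ω₀ φ : ℂ)) *
      ((Real.sin (t * Sf ω ω₀ φ) : ℝ) : ℂ) / t with hEdef
  -- derivative of F
  have hF : ∀ x ∈ Set.Icc a b, HasDerivAt F (g x * Real.cos (t * Sf ω ω₀ x) + E x) x := by
    intro x hx
    have hsx := hne x hx
    have hgx : HasDerivAt g (deriv g x) x := ((hg.differentiable (by simp)) x).hasDerivAt
    have hq := hasDerivAt_qf (ω := ω) (ω₀ := ω₀) hω hω₀ hsx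
    have hSx := hasDerivAt_Sf (ω := ω) hω₀ x
    have hsinS : HasDerivAt (fun φ => Real.sin (t * Sf ω ω₀ φ))
        (Real.cos (t * Sf ω ω₀ x) * (t * (2 * ω ^ 2 * Real.sin (2 * x) / Sf ω ω₀ x))) x :=
      (Real.hasDerivAt_sin _).comp x (hSx.const_mul t)
    have hr : HasDerivAt (fun φ => qf ω ω₀ φ * Real.sin (t * Sf ω ω₀ φ) / t)
        ((qd ω ω₀ x * Real.sin (t * Sf ω ω₀ x)
          + qf ω ω₀ x * (Real.cos (t * Sf ω ω₀ x) * (t * (2 * ω ^ 2 * Real.sin (2 * x) / Sf ω ω₀ x)))) / t) x :=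
      (hq.mul hsinS).div_const t
    have hreal : (qd ω ω₀ x * Real.sin (t * Sf ω ω₀ x)
          + qf ω ω₀ x * (Real.cos (t * Sf ω ω₀ x) * (t * (2 * ω ^ 2 * Real.sin (2 * x) / Sf ω ω₀ x)))) / t
        = Real.cos (t * Sf ω ω₀ x) + qd ω ω₀ x * Real.sin (t * Sf ω ω₀ x) / t := by
      have h1 : qf ω ω₀ x * (t * (2 * ω ^ 2 * Real.sin (2 * x) / Sf ω ω₀ x)) = t := by
        rw [qf]
        field_simp [(Sf_pos (ω := ω) hω₀ x).ne']
      have h2 : qf ω ω₀ x * (Real.cos (t * Sf ω ω₀ x) * (t * (2 * ω ^ 2 * Real.sin (2 * x) / Sf ω ω₀ x)))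
          = Real.cos (t * Sf ω ω₀ x) * t := by
        rw [show qf ω ω₀ x * (Real.cos (t * Sf ω ω₀ x) * (t * (2 * ω ^ 2 * Real.sin (2 * x) / Sf ω ω₀ x)))
          = Real.cos (t * Sf ω ω₀ x) * (qf ω ω₀ x * (t * (2 * ω ^ 2 * Real.sin (2 * x) / Sf ω ω₀ x))) by ring, h1]
      rw [h2, add_div, mul_div_cancel_right₀ _ ht.ne']
      ring
    rw [hreal] at hr
    have htotal := hgx.mul hr.ofReal_comp
    refine htotal.congr_deriv ?_
    simp only [hEdef]
    push_cast
    ring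
  -- continuity facts
  have hcont_main : Continuous (fun φ => g φ * ((Real.cos (t * Sf ω ω₀ φ) : ℝ) : ℂ)) := by
    apply hg.continuous.mul
    exact Complex.continuous_ofReal.comp (Real.continuous_cos.comp (continuous_const.mul continuous_Sf))
  have hcontqf : ContinuousOn (qf ω ω₀) (Set.Icc a b) := by
    apply ContinuousOn.div continuous_Sf.continuousOn
    · fun_prop
    · intro φ hφ
      have := hne φ hφ
      positivity
  have hcontqd : ContinuousOn (qd ω ω₀) (Set.Icc a b) := by
    apply ContinuousOn.sub
    · apply ContinuousOn.div continuousOn_const continuous_Sf.continuousOn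
      intro φ hφ; exact (Sf_pos (ω := ω) hω₀ φ).ne'
    · apply ContinuousOn.div
      · exact (continuous_Sf.continuousOn.mul (by fun_prop))
      · fun_prop
      · intro φ hφ
        have := hne φ hφ
        positivity
  have hcontE : ContinuousOn E (Set.Icc a b) := by
    apply ContinuousOn.div _ continuousOn_const (fun φ _ => Complex.ofReal_ne_zero.2 ht.ne')
    apply ContinuousOn.mul
    · apply ContinuousOn.add
      · exact ((hg.continuous_deriv (by simp)).continuousOn).mul
          (Complex.continuous_ofReal.comp_continuousOn hcontqf)
      · exact hg.continuous.continuousOn.mul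
          (Complex.continuous_ofReal.comp_continuousOn hcontqd)
    · exact (Complex.continuous_ofReal.comp
        (Real.continuous_sin.comp (continuous_const.mul continuous_Sf))).continuousOn
  have hintE : IntervalIntegrable E MeasureTheory.volume a b :=
    hcontE.intervalIntegrable_of_Icc hab
  have hint_main : IntervalIntegrable (fun φ => g φ * ((Real.cos (t * Sf ω ω₀ φ) : ℝ) : ℂ))
      MeasureTheory.volume a b := hcont_main.intervalIntegrable a b
  have hFTC : (∫ φ in a..b, (g φ * ((Real.cos (t * Sf ω ω₀ φ) : ℝ) : ℂ) + E φ)) = F b - F a := by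
    apply intervalIntegral.integral_eq_sub_of_hasDerivAt
    · intro x hx
      exact hF x (by rwa [Set.uIcc_of_le hab] at hx)
    · exact hint_main.add hintE
  have hsplit : (∫ φ in a..b, g φ * ((Real.cos (t * Sf ω ω₀ φ) : ℝ) : ℂ))
      = (F b - F a) - ∫ φ in a..b, E φ := by
    rw [← hFTC, intervalIntegral.integral_add hint_main hintE]
    ring
  rw [hsplit]
  -- bound the boundary terms
  have habs_le : ∀ x ∈ Set.Icc a b, 1 / |Real.sin (2 * x)| ≤ 1 / s₀ := fun x hx =>
    div_le_div₀ (by norm_num) (le_refl 1) hs₀ (hsin x hx)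
  have hqf' : ∀ x ∈ Set.Icc a b, |qf ω ω₀ x| ≤ (M / (2 * ω ^ 2)) * (1 / |Real.sin (2 * x)|) := by
    intro x hx
    have hsx := hne x hx
    have hsxa : 0 < |Real.sin (2 * x)| := abs_pos.2 hsx
    rw [qf, abs_div, abs_mul, abs_of_nonneg (by positivity : (0:ℝ) ≤ 2 * ω ^ 2),
      abs_of_nonneg (Sf_pos (ω := ω) hω₀ x).le, div_mul_div_comm, mul_one]
    apply div_le_div₀ (by positivity) (Sf_le (ω := ω) (ω₀ := ω₀) x) (by positivity) (le_refl _)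
  have hFbound : ∀ x ∈ Set.Icc a b, ‖F x‖ ≤ Cg * (M / (2 * ω ^ 2)) / (t * s₀) := by
    intro x hx
    have hsx := hne x hx
    have h1 : ‖F x‖ = ‖g x‖ * (|qf ω ω₀ x| * |Real.sin (t * Sf ω ω₀ x)| / t) := by
      rw [hFdef]
      simp only []
      rw [norm_mul, Complex.norm_real, Real.norm_eq_abs, abs_div, abs_mul,
        abs_of_nonneg ht.le]
    rw [h1]
    have h2 : |qf ω ω₀ x| * |Real.sin (t * Sf ω ω₀ x)| ≤ (M / (2 * ω ^ 2)) * (1 / s₀) := by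
      calc |qf ω ω₀ x| * |Real.sin (t * Sf ω ω₀ x)| ≤ |qf ω ω₀ x| * 1 :=
        mul_le_mul_of_nonneg_left (Real.abs_sin_le_one _) (abs_nonneg _)
      _ = |qf ω ω₀ x| := mul_one _
      _ ≤ (M / (2 * ω ^ 2)) * (1 / |Real.sin (2 * x)|) := hqf' x hx
      _ ≤ (M / (2 * ω ^ 2)) * (1 / s₀) :=
        mul_le_mul_of_nonneg_left (habs_le x hx) (by positivity)
    calc ‖g x‖ * (|qf ω ω₀ x| * |Real.sin (t * Sf ω ω₀ x)| / t)
        ≤ Cg * ((M / (2 * ω ^ 2)) * (1 / s₀) / t) := by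
          apply mul_le_mul (hCg x hx) _ (by positivity) hCg0
          exact div_le_div₀ (by positivity) h2 ht (le_refl t)
      _ = Cg * (M / (2 * ω ^ 2)) / (t * s₀) := by
          rw [mul_one_div, div_div, mul_comm s₀ t, mul_div_assoc]
  set C₂ := Cg' * (M / (2 * ω ^ 2)) + Cg * (1 / ω₀ + M / ω ^ 2) with hC₂
  have hMnn : 0 ≤ M / (2 * ω ^ 2) := div_nonneg (Real.sqrt_nonneg _) (by positivity)
  have hKnn : 0 ≤ 1 / ω₀ + M / ω ^ 2 :=
    add_nonneg (one_div_nonneg.2 hω₀.le) (div_nonneg (Real.sqrt_nonneg _) (by positivity))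
  have hC₂0 : 0 ≤ C₂ := add_nonneg (mul_nonneg hCg'0 hMnn) (mul_nonneg hCg0 hKnn)
  have hEb : ∀ φ ∈ Set.Icc a b, ‖E φ‖ ≤ (C₂ / t) * (1 / Real.sin (2 * φ) ^ 2) := by
    intro φ hφ
    have hsφ := hne φ hφ
    have hsq : (0:ℝ) < 1 / Real.sin (2 * φ) ^ 2 := by positivity
    have h1 : ‖E φ‖ = ‖deriv g φ * (qf ω ω₀ φ : ℂ) + g φ * (qd ω ω₀ φ : ℂ)‖
        * |Real.sin (t * Sf ω ω₀ φ)| / t := by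
      rw [hEdef]
      rw [norm_div, norm_mul, Complex.norm_real, Real.norm_eq_abs, Complex.norm_real,
        Real.norm_eq_abs, abs_of_nonneg ht.le]
    rw [h1]
    have h2 : ‖deriv g φ * (qf ω ω₀ φ : ℂ) + g φ * (qd ω ω₀ φ : ℂ)‖
        ≤ C₂ * (1 / Real.sin (2 * φ) ^ 2) := by
      calc ‖deriv g φ * (qf ω ω₀ φ : ℂ) + g φ * (qd ω ω₀ φ : ℂ)‖
          ≤ ‖deriv g φ‖ * |qf ω ω₀ φ| + ‖g φ‖ * |qd ω ω₀ φ| := by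
            refine (norm_add_le _ _).trans ?_
            rw [norm_mul, norm_mul, Complex.norm_real, Complex.norm_real,
              Real.norm_eq_abs, Real.norm_eq_abs]
        _ ≤ Cg' * ((M / (2 * ω ^ 2)) * (1 / Real.sin (2 * φ) ^ 2))
            + Cg * ((1 / ω₀ + M / ω ^ 2) * (1 / Real.sin (2 * φ) ^ 2)) := by
            apply add_le_add
            · exact mul_le_mul (hCg' φ hφ) (qf_abs_le (ω := ω) hω hω₀ hsφ) (abs_nonneg _) hCg'0
            · exact mul_le_mul (hCg φ hφ) (qd_abs_le (ω := ω) hω hω₀ hsφ) (abs_nonneg _) hCg0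
        _ = C₂ * (1 / Real.sin (2 * φ) ^ 2) := by rw [hC₂]; ring
    calc ‖deriv g φ * (qf ω ω₀ φ : ℂ) + g φ * (qd ω ω₀ φ : ℂ)‖ * |Real.sin (t * Sf ω ω₀ φ)| / t
        ≤ (C₂ * (1 / Real.sin (2 * φ) ^ 2)) * 1 / t := by
          apply div_le_div₀ (by positivity) _ ht (le_refl t)
          exact mul_le_mul h2 (Real.abs_sin_le_one _) (abs_nonneg _) (by positivity)
      _ = (C₂ / t) * (1 / Real.sin (2 * φ) ^ 2) := by ring
  have hcontsin : ContinuousOn (fun φ => 1 / Real.sin (2 * φ) ^ 2) (Set.Icc a b) := by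
    apply ContinuousOn.div continuousOn_const
    · fun_prop
    · intro φ hφ
      exact pow_ne_zero 2 (hne φ hφ)
  have hEnorm : ‖∫ φ in a..b, E φ‖ ≤ C₂ / (t * s₀) := by
    calc ‖∫ φ in a..b, E φ‖ ≤ ∫ φ in a..b, ‖E φ‖ :=
        intervalIntegral.norm_integral_le_integral_norm hab
      _ ≤ ∫ φ in a..b, (C₂ / t) * (1 / Real.sin (2 * φ) ^ 2) := by
          apply intervalIntegral.integral_mono_on hab
            (hcontE.norm.intervalIntegrable_of_Icc hab)
            ((continuousOn_const.mul hcontsin).intervalIntegrable_of_Icc hab) hEb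
      _ = (C₂ / t) * ∫ φ in a..b, (1 / Real.sin (2 * φ) ^ 2) :=
          intervalIntegral.integral_const_mul _ _
      _ ≤ (C₂ / t) * (1 / s₀) := by
          exact mul_le_mul_of_nonneg_left (integral_inv_sin_sq hab hs₀ hsin)
            (div_nonneg hC₂0 ht.le)
      _ = C₂ / (t * s₀) := by rw [div_mul_div_comm, mul_one]
  have hFb := hFbound b ⟨hab, le_refl b⟩
  have hFa := hFbound a ⟨le_refl a, hab⟩
  calc ‖F b - F a - ∫ φ in a..b, E φ‖ ≤ ‖F b - F a‖ + ‖∫ φ in a..b, E φ‖ := norm_sub_le _ _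
    _ ≤ (‖F b‖ + ‖F a‖) + ‖∫ φ in a..b, E φ‖ := by
        have := norm_sub_le (F b) (F a); linarith
    _ ≤ (Cg * (M / (2 * ω ^ 2)) / (t * s₀) + Cg * (M / (2 * ω ^ 2)) / (t * s₀)) + C₂ / (t * s₀) := by
        apply add_le_add (add_le_add hFb hFa) hEnorm
    _ = (2 * Cg * (M / (2 * ω ^ 2)) + C₂) / (t * s₀) := by ring


end Stmt15

/-- Stationary phase decay: for smooth `π`-periodic `g` and
`S(φ) = √(4ω² sin²φ + ω₀²)`, the oscillatory integral
`a(t) = (1/π) ∫_{−π/2}^{π/2} g(φ) cos(t S(φ)) dφ` is `O(t^{−1/2})` as `t → ∞`. -/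
theorem stmt_15 (ω ω₀ : ℝ) (hω : 0 < ω) (hω₀ : 0 < ω₀)
    (g : ℝ → ℂ) (hg : ContDiff ℝ (⊤ : ℕ∞) g) (hper : Function.Periodic g π)
    (S : ℝ → ℝ)
    (hS : ∀ φ, S φ = Real.sqrt (4 * ω ^ 2 * Real.sin φ ^ 2 + ω₀ ^ 2))
    (a : ℝ → ℂ)
    (ha : ∀ t, a t = (1 / (π : ℂ)) *
      ∫ φ in (-(π / 2))..(π / 2), g φ * Real.cos (t * S φ)) :
    a =O[atTop] fun t : ℝ => t ^ (-(1 / 2) : ℝ) := by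
  have hπ := Real.pi_pos
  have hπ6 := Real.pi_gt_d6
  have hSeq : S = Stmt15.Sf ω ω₀ := funext hS
  subst hSeq
  have haeq : a = fun t => (1 / (π : ℂ)) *
      ∫ φ in (-(π / 2))..(π / 2), g φ * Real.cos (t * Stmt15.Sf ω ω₀ φ) := funext ha
  subst haeq
  set M := Real.sqrt (4 * ω ^ 2 + ω₀ ^ 2) with hMdef
  -- bounds on g and deriv g on the big interval
  obtain ⟨Cg, hCgb⟩ := (isCompact_Icc (a := -(π/2)) (b := π/2)).exists_bound_of_continuousOn
    hg.continuous.continuousOn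
  obtain ⟨Cg', hCg'b⟩ := (isCompact_Icc (a := -(π/2)) (b := π/2)).exists_bound_of_continuousOn
    (hg.continuous_deriv (by simp)).continuousOn
  have h0mem : (0:ℝ) ∈ Set.Icc (-(π/2)) (π/2) := by constructor <;> linarith
  have hCg0 : 0 ≤ Cg := (norm_nonneg _).trans (hCgb 0 h0mem)
  have hCg'0 : 0 ≤ Cg' := (norm_nonneg _).trans (hCg'b 0 h0mem)
  set C₄ := 2 * Cg * (M / (2 * ω ^ 2)) + (Cg' * (M / (2 * ω ^ 2))
      + Cg * (1 / ω₀ + M / ω ^ 2)) with hC₄def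
  have hMnn : 0 ≤ M / (2 * ω ^ 2) := div_nonneg (Real.sqrt_nonneg _) (by positivity)
  have hC₄0 : 0 ≤ C₄ := by
    apply add_nonneg
    · positivity
    · apply add_nonneg (mul_nonneg hCg'0 hMnn)
      apply mul_nonneg hCg0
      exact add_nonneg (one_div_nonneg.2 hω₀.le) (div_nonneg (Real.sqrt_nonneg _) (by positivity))
  rw [Asymptotics.isBigO_iff]
  refine ⟨(4 * Cg + (π / 2) * C₄) / π, ?_⟩
  filter_upwards [eventually_ge_atTop (7:ℝ)] with t ht7
  have ht0 : (0:ℝ) < t := by linarith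
  set δ := t ^ (-(1/2) : ℝ) with hδdef
  have hδ0 : 0 < δ := Real.rpow_pos_of_pos ht0 _
  -- δ ≤ π/8
  have hδeq : δ = (Real.sqrt t)⁻¹ := by
    rw [hδdef, Real.sqrt_eq_rpow, ← Real.rpow_neg ht0.le]
  have hsqrt : 8 / π ≤ Real.sqrt t := by
    rw [Real.le_sqrt (by positivity) ht0.le]
    rw [div_pow, div_le_iff₀ (by positivity)]
    nlinarith
  have hδle : δ ≤ π / 8 := by
    rw [hδeq]
    calc (Real.sqrt t)⁻¹ ≤ (8/π)⁻¹ := by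
          apply inv_anti₀ (by positivity) hsqrt
      _ = π / 8 := by rw [inv_div]
  have hδle4 : δ ≤ π / 4 := by linarith
  -- t * δ = 1 / δ
  have hδδ : δ * δ = t⁻¹ := by
    rw [hδdef, ← Real.rpow_add ht0]
    norm_num
    exact Real.rpow_neg_one t
  have htδ : t * δ = 1 / δ := by
    rw [eq_div_iff hδ0.ne', mul_assoc, hδδ, mul_inv_cancel₀ ht0.ne']
  -- integrability
  have hcontf : Continuous (fun φ => g φ * ((Real.cos (t * Stmt15.Sf ω ω₀ φ) : ℝ) : ℂ)) := by
    apply hg.continuous.mul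
    exact Complex.continuous_ofReal.comp
      (Real.continuous_cos.comp (continuous_const.mul Stmt15.continuous_Sf))
  have hint : ∀ u v : ℝ, IntervalIntegrable
      (fun φ => g φ * ((Real.cos (t * Stmt15.Sf ω ω₀ φ) : ℝ) : ℂ)) MeasureTheory.volume u v :=
    fun u v => hcontf.intervalIntegrable u v
  -- splitting
  have hsplit : (∫ φ in (-(π/2))..(π/2), g φ * ((Real.cos (t * Stmt15.Sf ω ω₀ φ) : ℝ) : ℂ))
      = (∫ φ in (-(π/2))..(-(π/2)+δ), g φ * ((Real.cos (t * Stmt15.Sf ω ω₀ φ) : ℝ) : ℂ))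
      + (∫ φ in (-(π/2)+δ)..(-δ), g φ * ((Real.cos (t * Stmt15.Sf ω ω₀ φ) : ℝ) : ℂ))
      + (∫ φ in (-δ)..δ, g φ * ((Real.cos (t * Stmt15.Sf ω ω₀ φ) : ℝ) : ℂ))
      + (∫ φ in δ..(π/2-δ), g φ * ((Real.cos (t * Stmt15.Sf ω ω₀ φ) : ℝ) : ℂ))
      + (∫ φ in (π/2-δ)..(π/2), g φ * ((Real.cos (t * Stmt15.Sf ω ω₀ φ) : ℝ) : ℂ)) := by
    rw [intervalIntegral.integral_add_adjacent_intervals (hint _ _) (hint _ _),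
      intervalIntegral.integral_add_adjacent_intervals (hint _ _) (hint _ _),
      intervalIntegral.integral_add_adjacent_intervals (hint _ _) (hint _ _),
      intervalIntegral.integral_add_adjacent_intervals (hint _ _) (hint _ _)]
  -- trivial bounds
  have htriv : ∀ u v : ℝ, -(π/2) ≤ u → u ≤ v → v ≤ π/2 →
      ‖∫ φ in u..v, g φ * ((Real.cos (t * Stmt15.Sf ω ω₀ φ) : ℝ) : ℂ)‖ ≤ Cg * (v - u) := by
    intro u v hu huv hv
    have := intervalIntegral.norm_integral_le_of_norm_le_const (C := Cg)
      (f := fun φ => g φ * ((Real.cos (t * Stmt15.Sf ω ω₀ φ) : ℝ) : ℂ)) (a := u) (b := v) ?_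
    · rwa [abs_of_nonneg (by linarith)] at this
    · intro x hx
      rw [Set.uIoc_of_le huv] at hx
      have hxm : x ∈ Set.Icc (-(π/2)) (π/2) := ⟨by linarith [hx.1], by linarith [hx.2]⟩
      rw [norm_mul, Complex.norm_real, Real.norm_eq_abs]
      calc ‖g x‖ * |Real.cos (t * Stmt15.Sf ω ω₀ x)| ≤ Cg * 1 :=
        mul_le_mul (hCgb x hxm) (Real.abs_cos_le_one _) (abs_nonneg _) hCg0
      _ = Cg := mul_one _
  -- key bounds on the two oscillatory intervals
  have hkey : ∀ u v : ℝ, -(π/2) ≤ u → u ≤ v → v ≤ π/2 →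
      (∀ φ ∈ Set.Icc u v, 4 * δ / π ≤ |Real.sin (2 * φ)|) →
      ‖∫ φ in u..v, g φ * ((Real.cos (t * Stmt15.Sf ω ω₀ φ) : ℝ) : ℂ)‖ ≤ (π/4) * C₄ * δ := by
    intro u v hu huv hv hsin
    have hsub : Set.Icc u v ⊆ Set.Icc (-(π/2)) (π/2) := Set.Icc_subset_Icc hu hv
    have := Stmt15.key (ω := ω) (ω₀ := ω₀) hω hω₀ g hg ht0 huv
      (by positivity : (0:ℝ) < 4 * δ / π) hsin
      (fun φ hφ => hCgb φ (hsub hφ)) (fun φ hφ => hCg'b φ (hsub hφ))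
    refine this.trans ?_
    rw [← hMdef, ← hC₄def]
    have h1 : t * (4 * δ / π) = (4 / π) / δ := by
      rw [show t * (4 * δ / π) = (t * δ) * (4 / π) by ring, htδ]
      ring
    rw [h1, div_div_eq_mul_div, div_div_eq_mul_div]
    exact le_of_eq (by ring)
  -- sin lower bounds on the two intervals
  have hsinI4 : ∀ φ ∈ Set.Icc δ (π/2 - δ), 4 * δ / π ≤ |Real.sin (2 * φ)| := by
    intro φ hφ
    have h1 : |φ| = φ := abs_of_nonneg (by linarith [hφ.1])
    refine Stmt15.sin_lower_abs hδ0 ?_ ?_ <;> rw [h1]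
    · exact hφ.1
    · exact hφ.2
  have hsinI2 : ∀ φ ∈ Set.Icc (-(π/2)+δ) (-δ), 4 * δ / π ≤ |Real.sin (2 * φ)| := by
    intro φ hφ
    have h1 : |φ| = -φ := abs_of_nonpos (by linarith [hφ.2])
    refine Stmt15.sin_lower_abs hδ0 ?_ ?_ <;> rw [h1]
    · linarith [hφ.2]
    · linarith [hφ.1]
  -- apply bounds
  have hb1 := htriv (-(π/2)) (-(π/2)+δ) (le_refl _) (by linarith) (by linarith)
  have hb2 := hkey (-(π/2)+δ) (-δ) (by linarith) (by linarith) (by linarith) hsinI2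
  have hb3 := htriv (-δ) δ (by linarith) (by linarith) (by linarith)
  have hb4 := hkey δ (π/2-δ) (by linarith) (by linarith) (by linarith) hsinI4
  have hb5 := htriv (π/2-δ) (π/2) (by linarith) (by linarith) (le_refl _)
  -- final computation
  have hnorm1 : ‖(1 / (π:ℂ))‖ = 1 / π := by
    rw [norm_div, norm_one, Complex.norm_real, Real.norm_eq_abs, abs_of_pos hπ]
  have hnormδ : ‖t ^ (-(1/2) : ℝ)‖ = δ := by
    rw [Real.norm_eq_abs, abs_of_pos hδ0]
  rw [hnormδ]
  rw [norm_mul, hnorm1, hsplit]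
  have hsum : ‖(∫ φ in (-(π/2))..(-(π/2)+δ), g φ * ((Real.cos (t * Stmt15.Sf ω ω₀ φ) : ℝ) : ℂ))
      + (∫ φ in (-(π/2)+δ)..(-δ), g φ * ((Real.cos (t * Stmt15.Sf ω ω₀ φ) : ℝ) : ℂ))
      + (∫ φ in (-δ)..δ, g φ * ((Real.cos (t * Stmt15.Sf ω ω₀ φ) : ℝ) : ℂ))
      + (∫ φ in δ..(π/2-δ), g φ * ((Real.cos (t * Stmt15.Sf ω ω₀ φ) : ℝ) : ℂ))
      + (∫ φ in (π/2-δ)..(π/2), g φ * ((Real.cos (t * Stmt15.Sf ω ω₀ φ) : ℝ) : ℂ))‖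
      ≤ (4 * Cg + (π/2) * C₄) * δ := by
    have h1 : -(π/2)+δ - -(π/2) = δ := by ring
    have h2 : δ - -δ = 2*δ := by ring
    have h3 : π/2 - (π/2-δ) = δ := by ring
    rw [h1] at hb1; rw [h2] at hb3; rw [h3] at hb5
    calc _ ≤ Cg * δ + (π/4) * C₄ * δ + Cg * (2*δ) + (π/4) * C₄ * δ + Cg * δ := by
          refine (norm_add_le _ _).trans ?_
          have t1 := norm_add_le ((∫ φ in (-(π/2))..(-(π/2)+δ), g φ * ((Real.cos (t * Stmt15.Sf ω ω₀ φ) : ℝ) : ℂ))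
            + (∫ φ in (-(π/2)+δ)..(-δ), g φ * ((Real.cos (t * Stmt15.Sf ω ω₀ φ) : ℝ) : ℂ))
            + (∫ φ in (-δ)..δ, g φ * ((Real.cos (t * Stmt15.Sf ω ω₀ φ) : ℝ) : ℂ)))
            ((∫ φ in δ..(π/2-δ), g φ * ((Real.cos (t * Stmt15.Sf ω ω₀ φ) : ℝ) : ℂ)))
          have t2 := norm_add_le ((∫ φ in (-(π/2))..(-(π/2)+δ), g φ * ((Real.cos (t * Stmt15.Sf ω ω₀ φ) : ℝ) : ℂ))
            + (∫ φ in (-(π/2)+δ)..(-δ), g φ * ((Real.cos (t * Stmt15.Sf ω ω₀ φ) : ℝ) : ℂ)))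
            ((∫ φ in (-δ)..δ, g φ * ((Real.cos (t * Stmt15.Sf ω ω₀ φ) : ℝ) : ℂ)))
          have t3 := norm_add_le ((∫ φ in (-(π/2))..(-(π/2)+δ), g φ * ((Real.cos (t * Stmt15.Sf ω ω₀ φ) : ℝ) : ℂ)))
            ((∫ φ in (-(π/2)+δ)..(-δ), g φ * ((Real.cos (t * Stmt15.Sf ω ω₀ φ) : ℝ) : ℂ)))
          linarith
      _ = (4 * Cg + (π/2) * C₄) * δ := by ring
  calc 1/π * ‖_‖ ≤ 1/π * ((4 * Cg + (π/2) * C₄) * δ) := by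
        apply mul_le_mul_of_nonneg_left hsum (by positivity)
    _ = (4 * Cg + (π/2) * C₄) / π * δ := by ring
end
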